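/- arXiv:1407.7802 — 8 statements merged into one kernel-verified Lean document; each statement's English description precedes it below -/
import Mathlib

section
/- For every positive integer n and every real number λ with 0 < λ < n²π², one has G(λ) > 0; equivalently, tanh(√(λ+n²π²))/√(λ+n²π²) < tanh(√(n²π²−λ))/√(n²π²−λ). In particular the eigenvalue equation of the indefinite Laplacian has no root in the interval (0, n²π²). -/
open Real Set

lemma tanh_pos' {x : ℝ} (hx : 0 < x) : 0 < Real.tanh x := by
  rw [Real.tanh_eq_sinh_div_cosh]
  exact div_pos (by rwa [Real.sinh_pos_iff]) (Real.cosh_pos x)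

lemma continuous_tanh' : Continuous Real.tanh := by
  have : Real.tanh = fun x => Real.sinh x / Real.cosh x := funext Real.tanh_eq_sinh_div_cosh
  rw [this]
  exact Real.continuous_sinh.div Real.continuous_cosh fun x => (Real.cosh_pos x).ne'

lemma hasDerivAt_tanh (x : ℝ) : HasDerivAt Real.tanh (1 / Real.cosh x ^ 2) x := by
  have h := (Real.hasDerivAt_sinh x).div (Real.hasDerivAt_cosh x) (Real.cosh_pos x).ne'
  have : (Real.cosh x * Real.cosh x - Real.sinh x * Real.sinh x) / Real.cosh x ^ 2
      = 1 / Real.cosh x ^ 2 := by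
    rw [← sq, ← sq, Real.cosh_sq_sub_sinh_sq]
  rw [this] at h
  exact h.congr_of_eventuallyEq (by filter_upwards with y using Real.tanh_eq_sinh_div_cosh y)

lemma tanh_div_strictAnti : StrictAntiOn (fun x => Real.tanh x / x) (Set.Ioi 0) := by
  have hd : ∀ x ∈ interior (Set.Ioi (0:ℝ)),
      deriv (fun x => Real.tanh x / x) x < 0 := by
    intro x hx
    rw [interior_Ioi, mem_Ioi] at hx
    have h : HasDerivAt (fun x => Real.tanh x / x)
        ((1 / Real.cosh x ^ 2 * x - Real.tanh x * 1) / x ^ 2) x :=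
      (hasDerivAt_tanh x).div (hasDerivAt_id x) hx.ne'
    rw [h.deriv]
    apply div_neg_of_neg_of_pos _ (by positivity)
    have hc := Real.cosh_pos x
    have key : x < Real.sinh x * Real.cosh x := by
      calc x < Real.sinh x := (Real.self_lt_sinh_iff).2 hx
        _ ≤ Real.sinh x * Real.cosh x := by
          nlinarith [Real.one_le_cosh x, (Real.sinh_pos_iff).2 hx]
    rw [sub_neg, mul_one, Real.tanh_eq_sinh_div_cosh, div_mul_eq_mul_div,
      div_lt_div_iff₀ (by positivity) hc]
    nlinarith
  exact strictAntiOn_of_deriv_neg (convex_Ioi 0)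
    (continuous_tanh'.continuousOn.div continuousOn_id fun x hx => ne_of_gt hx) hd

lemma key_ineq {a b : ℝ} (ha : 0 < a) (hab : a < b) :
    Real.tanh b / b < Real.tanh a / a :=
  tanh_div_strictAnti (mem_Ioi.2 ha) (mem_Ioi.2 (ha.trans hab)) hab

/-- For every positive integer `n` and every real `λ` with `0 < λ < n²π²`,
the function `G(λ) = √(λ+n²π²)/tanh(√(λ+n²π²)) − √(n²π²−λ)/tanh(√(n²π²−λ))` is
strictly positive; equivalently
`tanh(√(λ+n²π²))/√(λ+n²π²) < tanh(√(n²π²−λ))/√(n²π²−λ)`. -/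
theorem stmt_0 (n : ℕ) (hn : 0 < n) (lam : ℝ)
    (hlam0 : 0 < lam) (hlam1 : lam < (n : ℝ)^2 * π^2) :
    0 < Real.sqrt (lam + (n : ℝ)^2 * π^2) / Real.tanh (Real.sqrt (lam + (n : ℝ)^2 * π^2))
        - Real.sqrt ((n : ℝ)^2 * π^2 - lam) / Real.tanh (Real.sqrt ((n : ℝ)^2 * π^2 - lam))
    ∧ Real.tanh (Real.sqrt (lam + (n : ℝ)^2 * π^2)) / Real.sqrt (lam + (n : ℝ)^2 * π^2)
        < Real.tanh (Real.sqrt ((n : ℝ)^2 * π^2 - lam)) / Real.sqrt ((n : ℝ)^2 * π^2 - lam) := by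
  set a := Real.sqrt ((n : ℝ)^2 * π^2 - lam)
  set b := Real.sqrt (lam + (n : ℝ)^2 * π^2)
  have ha : 0 < a := Real.sqrt_pos.2 (by linarith)
  have hab : a < b := by
    apply Real.sqrt_lt_sqrt (by linarith)
    linarith
  have hb : 0 < b := ha.trans hab
  have hta := tanh_pos' ha
  have htb := tanh_pos' hb
  have key := key_ineq ha hab
  refine ⟨?_, key⟩
  have h2 : a / Real.tanh a < b / Real.tanh b := by
    rw [div_lt_div_iff₀ hta htb]
    rw [div_lt_div_iff₀ hb ha] at key
    nlinarith
  linarith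
end

section
/- For every positive integer n and every real λ with 0 < λ < n²π², the function G has derivative at λ equal to (1/4)·[ (sinh(2√(λ+n²π²)) − 2√(λ+n²π²)) / (√(λ+n²π²)·sinh²(√(λ+n²π²))) + (sinh(2√(n²π²−λ)) − 2√(n²π²−λ)) / (√(n²π²−λ)·sinh²(√(n²π²−λ))) ], and this derivative is strictly positive. -/
open Real

/-!
Both terms of `G` are the function `φ(x) = √x coth √x`, evaluated at `λ + n²π²` and at
`n²π² − λ`; hence `G'(λ) = φ'(λ + n²π²) + φ'(n²π² − λ)`. Writing `u = √x`, one has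
`φ'(x) = (sinh 2u − 2u) / (4u sinh² u)`, which is positive because `sinh t > t` for `t > 0`.
-/

lemma hasDerivAt_self_div_tanh {u : ℝ} (hu : u ≠ 0) :
    HasDerivAt (fun t => t / tanh t) ((sinh (2 * u) - 2 * u) / (2 * sinh u ^ 2)) u := by
  have hsinh : sinh u ≠ 0 := sinh_ne_zero.2 hu
  have hfun : (fun t => t / tanh t) = fun t => t * cosh t / sinh t := by
    funext t
    rw [tanh_eq_sinh_div_cosh, div_div_eq_mul_div]
  rw [hfun]
  refine (((hasDerivAt_id' u).mul (hasDerivAt_cosh u)).div (hasDerivAt_sinh u) hsinh).congr_deriv ?_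
  rw [Pi.mul_apply, sinh_two_mul]
  field_simp
  linear_combination (-u) * cosh_sq u

lemma hasDerivAt_sqrt_div_tanh_sqrt {x : ℝ} (hx : 0 < x) :
    HasDerivAt (fun y => √y / tanh √y)
      ((sinh (2 * √x) - 2 * √x) / (4 * √x * sinh √x ^ 2)) x := by
  have hs : 0 < √x := sqrt_pos.2 hx
  refine ((hasDerivAt_self_div_tanh hs.ne').comp x (hasDerivAt_sqrt hx.ne')).congr_deriv ?_
  field_simp
  ring

lemma sqrt_div_tanh_sqrt_deriv_pos {x : ℝ} (hx : 0 < x) :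
    0 < (sinh (2 * √x) - 2 * √x) / (4 * √x * sinh √x ^ 2) := by
  have hs : 0 < √x := sqrt_pos.2 hx
  have hsinh : 0 < sinh √x := sinh_pos_iff.2 hs
  have hnum : 0 < sinh (2 * √x) - 2 * √x := sub_pos.2 (self_lt_sinh_iff.2 (by positivity))
  positivity

theorem stmt_1_general (n : ℕ) (lam : ℝ)
    (hlam0 : 0 < lam) (hlam1 : lam < (n : ℝ)^2 * π^2) :
    HasDerivAt
      (fun l : ℝ =>
        Real.sqrt (l + (n : ℝ)^2 * π^2) / Real.tanh (Real.sqrt (l + (n : ℝ)^2 * π^2))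
          - Real.sqrt ((n : ℝ)^2 * π^2 - l) / Real.tanh (Real.sqrt ((n : ℝ)^2 * π^2 - l)))
      ((1/4) *
        ((Real.sinh (2 * Real.sqrt (lam + (n : ℝ)^2 * π^2)) - 2 * Real.sqrt (lam + (n : ℝ)^2 * π^2))
            / (Real.sqrt (lam + (n : ℝ)^2 * π^2) * (Real.sinh (Real.sqrt (lam + (n : ℝ)^2 * π^2)))^2)
          + (Real.sinh (2 * Real.sqrt ((n : ℝ)^2 * π^2 - lam)) - 2 * Real.sqrt ((n : ℝ)^2 * π^2 - lam))
            / (Real.sqrt ((n : ℝ)^2 * π^2 - lam) * (Real.sinh (Real.sqrt ((n : ℝ)^2 * π^2 - lam)))^2)))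
      lam
    ∧ 0 < (1/4) *
        ((Real.sinh (2 * Real.sqrt (lam + (n : ℝ)^2 * π^2)) - 2 * Real.sqrt (lam + (n : ℝ)^2 * π^2))
            / (Real.sqrt (lam + (n : ℝ)^2 * π^2) * (Real.sinh (Real.sqrt (lam + (n : ℝ)^2 * π^2)))^2)
          + (Real.sinh (2 * Real.sqrt ((n : ℝ)^2 * π^2 - lam)) - 2 * Real.sqrt ((n : ℝ)^2 * π^2 - lam))
            / (Real.sqrt ((n : ℝ)^2 * π^2 - lam) * (Real.sinh (Real.sqrt ((n : ℝ)^2 * π^2 - lam)))^2)) := by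
  set c : ℝ := (n : ℝ)^2 * π^2
  have hplus : 0 < lam + c := by positivity
  have hminus : 0 < c - lam := sub_pos.2 hlam1
  have hderiv :=
    ((hasDerivAt_sqrt_div_tanh_sqrt hplus).comp lam ((hasDerivAt_id lam).add_const c)).sub
      ((hasDerivAt_sqrt_div_tanh_sqrt hminus).comp lam ((hasDerivAt_id lam).const_sub c))
  have hpos := add_pos (sqrt_div_tanh_sqrt_deriv_pos hplus) (sqrt_div_tanh_sqrt_deriv_pos hminus)
  refine ⟨hderiv.congr_deriv (by ring), ?_⟩
  exact hpos.trans_eq (by ring)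

/-- For every positive integer `n` and every real `λ` with `0 < λ < n²π²`,
the function `G(μ) = √(μ+n²π²)/tanh(√(μ+n²π²)) − √(n²π²−μ)/tanh(√(n²π²−μ))`
has derivative at `λ` equal to
`(1/4)·[(sinh(2√(λ+n²π²)) − 2√(λ+n²π²))/(√(λ+n²π²)·sinh²(√(λ+n²π²)))
      + (sinh(2√(n²π²−λ)) − 2√(n²π²−λ))/(√(n²π²−λ)·sinh²(√(n²π²−λ)))]`,
and this derivative is strictly positive. -/
theorem stmt_1 (n : ℕ) (hn : 0 < n) (lam : ℝ)
    (hlam0 : 0 < lam) (hlam1 : lam < (n : ℝ)^2 * π^2) :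
    HasDerivAt
      (fun l : ℝ =>
        Real.sqrt (l + (n : ℝ)^2 * π^2) / Real.tanh (Real.sqrt (l + (n : ℝ)^2 * π^2))
          - Real.sqrt ((n : ℝ)^2 * π^2 - l) / Real.tanh (Real.sqrt ((n : ℝ)^2 * π^2 - l)))
      ((1/4) *
        ((Real.sinh (2 * Real.sqrt (lam + (n : ℝ)^2 * π^2)) - 2 * Real.sqrt (lam + (n : ℝ)^2 * π^2))
            / (Real.sqrt (lam + (n : ℝ)^2 * π^2) * (Real.sinh (Real.sqrt (lam + (n : ℝ)^2 * π^2)))^2)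
          + (Real.sinh (2 * Real.sqrt ((n : ℝ)^2 * π^2 - lam)) - 2 * Real.sqrt ((n : ℝ)^2 * π^2 - lam))
            / (Real.sqrt ((n : ℝ)^2 * π^2 - lam) * (Real.sinh (Real.sqrt ((n : ℝ)^2 * π^2 - lam)))^2)))
      lam
    ∧ 0 < (1/4) *
        ((Real.sinh (2 * Real.sqrt (lam + (n : ℝ)^2 * π^2)) - 2 * Real.sqrt (lam + (n : ℝ)^2 * π^2))
            / (Real.sqrt (lam + (n : ℝ)^2 * π^2) * (Real.sinh (Real.sqrt (lam + (n : ℝ)^2 * π^2)))^2)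
          + (Real.sinh (2 * Real.sqrt ((n : ℝ)^2 * π^2 - lam)) - 2 * Real.sqrt ((n : ℝ)^2 * π^2 - lam))
            / (Real.sqrt ((n : ℝ)^2 * π^2 - lam) * (Real.sinh (Real.sqrt ((n : ℝ)^2 * π^2 - lam)))^2)) :=
  stmt_1_general n lam hlam0 hlam1
end

section
/- For every positive integer n and every real number M there exists a real λ with λ > M, λ > n²π², cos(√(λ−n²π²)) ≠ 0 and F(λ) = 0. Hence for each n the eigenvalue equation has infinitely many roots accumulating at +∞. -/
set_option maxHeartbeats 800000


open Real

/-- For every positive integer `n` and every real `M` there exists `λ > M` with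
`λ > n²π²`, `cos(√(λ−n²π²)) ≠ 0` and `F(λ) = 0`, where
`F(μ) = tanh(√(μ+n²π²))/√(μ+n²π²) − tan(√(μ−n²π²))/√(μ−n²π²)`. Hence for each `n`
the eigenvalue equation has infinitely many roots accumulating at `+∞`. -/
theorem stmt_6 (n : ℕ) (hn : 0 < n) (M : ℝ) :
    ∃ lam : ℝ, lam > M ∧ lam > (n : ℝ)^2 * π^2
      ∧ Real.cos (Real.sqrt (lam - (n : ℝ)^2 * π^2)) ≠ 0
      ∧ Real.tanh (Real.sqrt (lam + (n : ℝ)^2 * π^2)) / Real.sqrt (lam + (n : ℝ)^2 * π^2)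
          - Real.tan (Real.sqrt (lam - (n : ℝ)^2 * π^2)) / Real.sqrt (lam - (n : ℝ)^2 * π^2) = 0 := by
  have hπ : 0 < π := Real.pi_pos
  have hπ3 : 3 < π := by linarith [Real.pi_gt_three]
  obtain ⟨k0, hk0⟩ := exists_nat_gt (|M|)
  set k : ℕ := k0 + 1 with hkdef
  set c : ℝ := (n : ℝ)^2 * π^2 with hc
  have hnpos : (0:ℝ) < (n:ℝ) := by exact_mod_cast hn
  have hcpos : 0 < c := by positivity
  set a : ℝ := (k : ℝ) * π with ha
  set b : ℝ := (k : ℝ) * π + π / 4 with hb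
  have hk1 : (1:ℝ) ≤ (k : ℝ) := by exact_mod_cast Nat.one_le_iff_ne_zero.mpr (by omega)
  have hapos : 0 < a := by
    rw [ha]; positivity
  have hab : a ≤ b := by rw [ha, hb]; linarith
  have hbpos : 0 < b := lt_of_lt_of_le hapos hab
  -- cos is nonzero on [a, b]
  have hcos : ∀ s ∈ Set.Icc a b, Real.cos s ≠ 0 := by
    intro s hs
    rw [Real.cos_ne_zero_iff]
    intro m hm
    have h1 : a ≤ (2 * (m:ℝ) + 1) * π / 2 := hm ▸ hs.1
    have h2 : (2 * (m:ℝ) + 1) * π / 2 ≤ b := hm ▸ hs.2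
    rw [ha] at h1
    rw [hb] at h2
    have e1 : (2 * (k:ℝ)) ≤ 2 * (m:ℝ) + 1 := by nlinarith
    have e2 : 2 * (m:ℝ) + 1 ≤ 2 * (k:ℝ) + 1/2 := by nlinarith
    have i1 : (2 * (k:ℤ) : ℤ) ≤ 2 * m + 1 := by exact_mod_cast e1
    have i2 : (2 * m + 1 : ℤ) ≤ 2 * (k:ℤ) := by
      have : (2 * (m:ℝ) + 1) < 2 * (k:ℝ) + 1 := by linarith
      have h' : (2 * m + 1 : ℤ) < 2 * (k:ℤ) + 1 := by exact_mod_cast this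
      omega
    omega
  -- the function g
  set g : ℝ → ℝ := fun s =>
    Real.tanh (Real.sqrt (s^2 + 2*c)) / Real.sqrt (s^2 + 2*c) - Real.tan s / s with hg
  have hsqrtpos : ∀ s : ℝ, 0 < Real.sqrt (s^2 + 2*c) := by
    intro s
    apply Real.sqrt_pos.mpr
    nlinarith [sq_nonneg s]
  have hcont : ContinuousOn g (Set.Icc a b) := by
    apply ContinuousOn.sub
    · apply ContinuousOn.div
      · have htanh_cont : Continuous Real.tanh := by
          have : Real.tanh = fun x => Real.sinh x / Real.cosh x := by
            funext x; exact Real.tanh_eq_sinh_div_cosh x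
          rw [this]
          exact Real.continuous_sinh.div Real.continuous_cosh fun x => ne_of_gt (Real.cosh_pos x)
        exact (htanh_cont.comp ((continuous_pow 2).add continuous_const).sqrt).continuousOn
      · exact (((continuous_pow 2).add continuous_const).sqrt).continuousOn
      · intro x _; exact ne_of_gt (hsqrtpos x)
    · apply ContinuousOn.div
      · intro x hx
        exact (Real.continuousAt_tan.mpr (hcos x hx)).continuousWithinAt
      · exact continuousOn_id
      · intro x hx
        have := hx.1
        exact ne_of_gt (lt_of_lt_of_le hapos this)
  have htanh_lt_one : ∀ t : ℝ, Real.tanh t < 1 := by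
    intro t
    rw [Real.tanh_eq_sinh_div_cosh, div_lt_one (Real.cosh_pos t)]
    exact Real.sinh_lt_cosh t
  have htanh_pos : ∀ t : ℝ, 0 < t → 0 < Real.tanh t := by
    intro t ht
    rw [Real.tanh_eq_sinh_div_cosh]
    exact div_pos (Real.sinh_pos_iff.mpr ht) (Real.cosh_pos t)
  have hga : 0 < g a := by
    have htan : Real.tan a = 0 := by rw [ha]; exact Real.tan_nat_mul_pi k
    rw [hg]
    simp only [htan, zero_div, sub_zero]
    exact div_pos (htanh_pos _ (hsqrtpos a)) (hsqrtpos a)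
  have hgb : g b < 0 := by
    have htan : Real.tan b = 1 := by
      rw [hb, show (k:ℝ) * π + π/4 = π/4 + (k:ℝ) * π by ring,
        Real.tan_add_nat_mul_pi, Real.tan_pi_div_four]
    set T : ℝ := Real.sqrt (b^2 + 2*c) with hT
    have hTpos : 0 < T := hsqrtpos b
    have hT2 : T^2 = b^2 + 2*c := Real.sq_sqrt (by nlinarith [sq_nonneg b])
    have hbT : b < T := by nlinarith
    rw [hg]
    simp only [htan]
    have h1 : Real.tanh T / T < 1 / b := by
      rw [div_lt_div_iff₀ hTpos hbpos]
      nlinarith [htanh_lt_one T, htanh_pos T hTpos]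
    linarith
  obtain ⟨s, hs, hgs⟩ := intermediate_value_Icc' hab hcont
    (Set.mem_Icc.mpr ⟨le_of_lt hgb, le_of_lt hga⟩)
  have hsa : a ≤ s := hs.1
  have hspos : 0 < s := lt_of_lt_of_le hapos hsa
  refine ⟨s^2 + c, ?_, ?_, ?_, ?_⟩
  · -- s^2 + c > M
    have hkM : |M| < (k:ℝ) := by
      rw [hkdef]; push_cast; linarith [(by exact_mod_cast hk0 : |M| < (k0:ℝ))]
    have : (k:ℝ) ≤ s := by
      have : (k:ℝ) * 1 ≤ (k:ℝ) * π := by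
        apply mul_le_mul_of_nonneg_left (by linarith) (by linarith)
      rw [mul_one] at this; linarith
    nlinarith [le_abs_self M, abs_nonneg M]
  · -- s^2 + c > c
    nlinarith
  · rw [show s^2 + c - c = s^2 by ring, Real.sqrt_sq (le_of_lt hspos)]
    exact hcos s hs
  · rw [show s^2 + c - c = s^2 by ring, show s^2 + c + c = s^2 + 2*c by ring,
      Real.sqrt_sq (le_of_lt hspos)]
    exact hgs
end

section
/- Let n be a positive integer, λ > n²π² a real number, a = √(λ+n²π²), b = √(λ−n²π²), and assume cos b ≠ 0. Define ψ : ℝ → ℝ by ψ(x) = sinh(a)·sin(b·(1−x)) for x ≥ 0 and ψ(x) = sin(b)·sinh(a·(1+x)) for x < 0. Then: (i) ψ(1) = 0 and ψ(−1) = 0; (ii) for every x ∈ (0,1), the second derivative of ψ at x equals −(λ−n²π²)·ψ(x); (iii) for every x ∈ (−1,0), the second derivative of ψ at x equals (λ+n²π²)·ψ(x); (iv) ψ has one-sided derivative d₊ = −b·sinh(a)·cos(b) at 0 from the right (within [0,∞)) and one-sided derivative d₋ = a·sin(b)·cosh(a) at 0 from the left (within (−∞,0]); and (v) the interface condition d₊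 = −d₋ holds if and only if tanh(a)/a = tan(b)/b. -/
open Real

lemma aux_g_deriv (a b : ℝ) :
    deriv (fun y : ℝ => Real.sinh a * Real.sin (b * (1 - y)))
      = fun y : ℝ => Real.sinh a * (Real.cos (b * (1 - y)) * (-b)) := by
  funext y
  have h1 : HasDerivAt (fun y : ℝ => b * (1 - y)) (-b) y := by
    have := ((hasDerivAt_id y).const_sub (1:ℝ)).const_mul b
    simpa using this
  exact (((Real.hasDerivAt_sin _).comp y h1).const_mul (Real.sinh a)).deriv

lemma aux_g_deriv2 (a b : ℝ) (x : ℝ) :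
    deriv (deriv (fun y : ℝ => Real.sinh a * Real.sin (b * (1 - y)))) x
      = -(b^2) * (Real.sinh a * Real.sin (b * (1 - x))) := by
  rw [aux_g_deriv]
  have h1 : HasDerivAt (fun y : ℝ => b * (1 - y)) (-b) x := by
    have := ((hasDerivAt_id x).const_sub (1:ℝ)).const_mul b
    simpa using this
  have h2 := ((((Real.hasDerivAt_cos _).comp x h1).mul_const (-b)).const_mul
      (Real.sinh a)).deriv
  simp only [Function.comp] at h2
  rw [h2]; ring

lemma aux_h_deriv (a b : ℝ) :
    deriv (fun y : ℝ => Real.sin b * Real.sinh (a * (1 + y)))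
      = fun y : ℝ => Real.sin b * (Real.cosh (a * (1 + y)) * a) := by
  funext y
  have h1 : HasDerivAt (fun y : ℝ => a * (1 + y)) a y := by
    have := ((hasDerivAt_id y).const_add (1:ℝ)).const_mul a
    simpa using this
  exact (((Real.hasDerivAt_sinh _).comp y h1).const_mul (Real.sin b)).deriv

lemma aux_h_deriv2 (a b : ℝ) (x : ℝ) :
    deriv (deriv (fun y : ℝ => Real.sin b * Real.sinh (a * (1 + y)))) x
      = a^2 * (Real.sin b * Real.sinh (a * (1 + x))) := by
  rw [aux_h_deriv]
  have h1 : HasDerivAt (fun y : ℝ => a * (1 + y)) a x := by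
    have := ((hasDerivAt_id x).const_add (1:ℝ)).const_mul a
    simpa using this
  have h2 := ((((Real.hasDerivAt_cosh _).comp x h1).mul_const a).const_mul
      (Real.sin b)).deriv
  simp only [Function.comp] at h2
  rw [h2]; ring

/-- Let `n` be a positive integer, `λ > n²π²`, `a = √(λ+n²π²)`, `b = √(λ−n²π²)`, `cos b ≠ 0`,
and let `ψ(x) = sinh(a)·sin(b(1−x))` for `x ≥ 0`, `ψ(x) = sin(b)·sinh(a(1+x))` for `x < 0`.
Then: (i) `ψ(1) = 0 = ψ(−1)`; (ii) `ψ'' = −(λ−n²π²)ψ` on `(0,1)`;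
(iii) `ψ'' = (λ+n²π²)ψ` on `(−1,0)`; (iv) `ψ` has the one-sided derivatives
`d₊ = −b·sinh(a)·cos(b)` at `0` from the right and `d₋ = a·sin(b)·cosh(a)` at `0` from the
left; (v) the interface condition `d₊ = −d₋` holds iff `tanh(a)/a = tan(b)/b`. -/
theorem stmt_7 (n : ℕ) (hn : 0 < n) (lam : ℝ) (hlam : lam > (n : ℝ)^2 * π^2)
    (a b : ℝ) (ha : a = Real.sqrt (lam + (n : ℝ)^2 * π^2))
    (hb : b = Real.sqrt (lam - (n : ℝ)^2 * π^2))
    (hcos : Real.cos b ≠ 0)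
    (ψ : ℝ → ℝ)
    (hψ : ψ = fun x : ℝ =>
      if 0 ≤ x then Real.sinh a * Real.sin (b * (1 - x))
      else Real.sin b * Real.sinh (a * (1 + x))) :
    ψ 1 = 0 ∧ ψ (-1) = 0
    ∧ (∀ x ∈ Set.Ioo (0:ℝ) 1, deriv (deriv ψ) x = -(lam - (n : ℝ)^2 * π^2) * ψ x)
    ∧ (∀ x ∈ Set.Ioo (-1:ℝ) 0, deriv (deriv ψ) x = (lam + (n : ℝ)^2 * π^2) * ψ x)
    ∧ HasDerivWithinAt ψ (-b * Real.sinh a * Real.cos b) (Set.Ici (0:ℝ)) 0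
    ∧ HasDerivWithinAt ψ (a * Real.sin b * Real.cosh a) (Set.Iic (0:ℝ)) 0
    ∧ ((-b * Real.sinh a * Real.cos b = -(a * Real.sin b * Real.cosh a))
        ↔ Real.tanh a / a = Real.tan b / b) := by
  have hnpi : (0:ℝ) < (n : ℝ)^2 * π^2 := by
    have : (0:ℝ) < (n:ℝ) := by exact_mod_cast hn
    positivity
  have hla : (0:ℝ) < lam + (n : ℝ)^2 * π^2 := by linarith
  have hlb : (0:ℝ) < lam - (n : ℝ)^2 * π^2 := by linarith
  have hapos : 0 < a := ha ▸ Real.sqrt_pos.mpr hla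
  have hbpos : 0 < b := hb ▸ Real.sqrt_pos.mpr hlb
  have ha2 : a^2 = lam + (n : ℝ)^2 * π^2 := by rw [ha, Real.sq_sqrt hla.le]
  have hb2 : b^2 = lam - (n : ℝ)^2 * π^2 := by rw [hb, Real.sq_sqrt hlb.le]
  set g : ℝ → ℝ := fun y => Real.sinh a * Real.sin (b * (1 - y)) with hg
  set h : ℝ → ℝ := fun y => Real.sin b * Real.sinh (a * (1 + y)) with hh
  refine ⟨?_, ?_, ?_, ?_, ?_, ?_, ?_⟩
  · simp [hψ]
  · simp [hψ]
  · intro x hx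
    have hmem : ∀ᶠ y in nhds x, 0 < y := eventually_gt_nhds hx.1
    have heq : ψ =ᶠ[nhds x] g := hmem.mono fun y hy => by simp [hψ, hg, hy.le]
    have heq' : deriv ψ =ᶠ[nhds x] deriv g := heq.deriv
    rw [heq'.deriv_eq, aux_g_deriv2, hb2, heq.self_of_nhds]
  · intro x hx
    have hmem : ∀ᶠ y in nhds x, y < 0 := eventually_lt_nhds hx.2
    have heq : ψ =ᶠ[nhds x] h := hmem.mono fun y hy => by simp [hψ, hh, not_le.mpr hy]
    have heq' : deriv ψ =ᶠ[nhds x] deriv h := heq.deriv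
    rw [heq'.deriv_eq, aux_h_deriv2, ha2, heq.self_of_nhds]
  · have h1 : HasDerivAt (fun y : ℝ => b * (1 - y)) (-b) (0:ℝ) := by
      have := ((hasDerivAt_id (0:ℝ)).const_sub (1:ℝ)).const_mul b
      simpa using this
    have hg' : HasDerivAt g (Real.sinh a * (Real.cos (b * (1 - 0)) * (-b))) 0 :=
      ((Real.hasDerivAt_sin _).comp 0 h1).const_mul (Real.sinh a)
    have := hg'.hasDerivWithinAt (s := Set.Ici (0:ℝ))
    refine (this.congr (fun y hy => by simp [hψ, hg, Set.mem_Ici.mp hy])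
      (by simp [hψ, hg])).congr_deriv ?_
    simp; ring
  · have h1 : HasDerivAt (fun y : ℝ => a * (1 + y)) a (0:ℝ) := by
      have := ((hasDerivAt_id (0:ℝ)).const_add (1:ℝ)).const_mul a
      simpa using this
    have hh' : HasDerivAt h (Real.sin b * (Real.cosh (a * (1 + 0)) * a)) 0 :=
      ((Real.hasDerivAt_sinh _).comp 0 h1).const_mul (Real.sin b)
    have := hh'.hasDerivWithinAt (s := Set.Iic (0:ℝ))
    refine (this.congr (fun y hy => ?_) (by simp [hψ, hh, mul_comm])).congr_deriv ?_
    · rcases (Set.mem_Iic.mp hy).lt_or_eq with hlt | hEq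
      · simp [hψ, hh, not_le.mpr hlt]
      · subst hEq; simp [hψ, hh, mul_comm]
    · simp; ring
  · have hca : Real.cosh a ≠ 0 := (Real.cosh_pos a).ne'
    rw [Real.tanh_eq_sinh_div_cosh, Real.tan_eq_sin_div_cos, div_div, div_div,
      div_eq_div_iff (mul_ne_zero hca hapos.ne') (mul_ne_zero hcos hbpos.ne')]
    constructor <;> intro hE <;> linear_combination -hE
end

section
/- For every complex number z with Re z ≠ 0, one has |Re(tanh z / z)| ≤ (sinh(2·|Re z|) + 1) / ( |Re z| · (cosh(2·|Re z|) − 1) ). -/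
/-!
With `z = x + iy`, `‖sinh z‖² = sinh² x + sin² y ≤ cosh² x` and `‖cosh z‖² = sinh² x + cos² y ≥ sinh² x`;
together with `|x| ≤ ‖z‖` this gives `‖tanh z / z‖ ≤ cosh |x| / (sinh |x| · |x|)`, and the claimed bound
exceeds this quantity by exactly `1 / (|x| (cosh (2|x|) - 1))`.
-/

open Real

namespace Complex

theorem sinh_eq (z : ℂ) :
    sinh z = (Real.sinh z.re * Real.cos z.im : ℝ) + (Real.cosh z.re * Real.sin z.im : ℝ) * I := by
  conv_lhs => rw [← re_add_im z]
  rw [sinh_add, sinh_mul_I, cosh_mul_I]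
  push_cast
  ring

theorem cosh_eq (z : ℂ) :
    cosh z = (Real.cosh z.re * Real.cos z.im : ℝ) + (Real.sinh z.re * Real.sin z.im : ℝ) * I := by
  conv_lhs => rw [← re_add_im z]
  rw [cosh_add, sinh_mul_I, cosh_mul_I]
  push_cast
  ring

theorem normSq_sinh (z : ℂ) : normSq (sinh z) = Real.sinh z.re ^ 2 + Real.sin z.im ^ 2 := by
  rw [sinh_eq, normSq_add_mul_I]
  linear_combination (Real.sinh z.re ^ 2) * Real.sin_sq_add_cos_sq z.im
    + Real.sin z.im ^ 2 * Real.cosh_sq z.re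

theorem normSq_cosh (z : ℂ) : normSq (cosh z) = Real.sinh z.re ^ 2 + Real.cos z.im ^ 2 := by
  rw [cosh_eq, normSq_add_mul_I]
  linear_combination (Real.sinh z.re ^ 2) * Real.sin_sq_add_cos_sq z.im
    + Real.cos z.im ^ 2 * Real.cosh_sq z.re

theorem norm_sinh_le_cosh_re (z : ℂ) : ‖sinh z‖ ≤ Real.cosh z.re := by
  rw [← sq_le_sq₀ (norm_nonneg _) (Real.cosh_pos _).le, Complex.sq_norm, normSq_sinh, Real.cosh_sq]
  gcongr
  exact Real.sin_sq_le_one _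

theorem abs_sinh_re_le_norm_cosh (z : ℂ) : |Real.sinh z.re| ≤ ‖cosh z‖ := by
  rw [← sq_le_sq₀ (abs_nonneg _) (norm_nonneg _), sq_abs, Complex.sq_norm, normSq_cosh]
  exact le_add_of_nonneg_right (sq_nonneg _)

theorem norm_tanh_div_le (z : ℂ) (hz : z.re ≠ 0) :
    ‖tanh z / z‖ ≤ Real.cosh |z.re| / (Real.sinh |z.re| * |z.re|) := by
  rw [tanh_eq_sinh_div_cosh, norm_div, norm_div, div_div, Real.cosh_abs, ← Real.abs_sinh]
  gcongr
  · exact norm_sinh_le_cosh_re z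
  · exact abs_sinh_re_le_norm_cosh z
  · exact abs_re_le_norm z

end Complex

theorem Real.cosh_div_sinh_mul_le {t : ℝ} (ht : 0 < t) :
    cosh t / (sinh t * t) ≤ (sinh (2 * t) + 1) / (t * (cosh (2 * t) - 1)) := by
  have key : (sinh (2 * t) + 1) / (t * (cosh (2 * t) - 1))
      = cosh t / (sinh t * t) + 1 / (2 * t * sinh t ^ 2) := by
    have hcosh : cosh (2 * t) - 1 = 2 * sinh t ^ 2 := by rw [cosh_two_mul, cosh_sq]; ring
    rw [sinh_two_mul, hcosh]
    field_simp
  rw [key]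
  exact le_add_of_nonneg_right (by positivity)

/-- For every complex `z` with `Re z ≠ 0`,
`|Re(tanh z / z)| ≤ (sinh(2|Re z|) + 1)/(|Re z|·(cosh(2|Re z|) − 1))`. -/
theorem stmt_11 (z : ℂ) (hz : z.re ≠ 0) :
    |(Complex.tanh z / z).re|
      ≤ (Real.sinh (2 * |z.re|) + 1) / (|z.re| * (Real.cosh (2 * |z.re|) - 1)) :=
  (Complex.abs_re_le_norm _).trans <|
    (Complex.norm_tanh_div_le z hz).trans (Real.cosh_div_sinh_mul_le (abs_pos.mpr hz))
end

section
/- The function x ↦ (sinh(2x) + 1) / ( x · (cosh(2x) − 1) ) is antitone (non-increasing) on the interval (0, ∞): for all real numbers 0 < x ≤ y, (sinh(2y) + 1)/(y·(cosh(2y) − 1)) ≤ (sinh(2x) + 1)/(x·(cosh(2x) − 1)). -/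
open Real

lemma key_split (x : ℝ) (hx : 0 < x) :
    (Real.sinh (2 * x) + 1) / (x * (Real.cosh (2 * x) - 1))
      = Real.cosh x / (x * Real.sinh x) + 1 / (2 * x * Real.sinh x ^ 2) := by
  have hs : 0 < Real.sinh x := Real.sinh_pos_iff.2 hx
  rw [Real.sinh_two_mul, Real.cosh_two_mul, Real.cosh_sq']
  rw [div_add_div _ _ (by positivity) (by positivity : (2 * x * Real.sinh x ^ 2 : ℝ) ≠ 0),
    div_eq_div_iff (by nlinarith [mul_pos hx (pow_pos hs 2)]) (by positivity)]
  ring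

/-- The function `x ↦ (sinh(2x) + 1)/(x·(cosh(2x) − 1))` is antitone (non-increasing)
on `(0, ∞)`. -/
theorem stmt_12 :
    ∀ x y : ℝ, 0 < x → x ≤ y →
      (Real.sinh (2 * y) + 1) / (y * (Real.cosh (2 * y) - 1))
        ≤ (Real.sinh (2 * x) + 1) / (x * (Real.cosh (2 * x) - 1)) := by
  intro x y hx hxy
  have hy : 0 < y := lt_of_lt_of_le hx hxy
  have hsx : 0 < Real.sinh x := Real.sinh_pos_iff.2 hx
  have hsy : 0 < Real.sinh y := Real.sinh_pos_iff.2 hy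
  have hcx : 0 < Real.cosh x := Real.cosh_pos _
  have hcy : 0 < Real.cosh y := Real.cosh_pos _
  rw [key_split x hx, key_split y hy]
  have hsle : Real.sinh x ≤ Real.sinh y := Real.sinh_le_sinh.2 hxy
  have term1 : Real.cosh y / (y * Real.sinh y) ≤ Real.cosh x / (x * Real.sinh x) := by
    rw [div_le_div_iff₀ (by positivity) (by positivity)]
    have h1 : Real.sinh x * Real.cosh y ≤ Real.cosh x * Real.sinh y := by
      have := Real.sinh_nonpos_iff.2 (sub_nonpos.2 hxy)
      rw [Real.sinh_sub] at this
      linarith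
    calc Real.cosh y * (x * Real.sinh x) = x * (Real.sinh x * Real.cosh y) := by ring
      _ ≤ y * (Real.cosh x * Real.sinh y) :=
          mul_le_mul hxy h1 (by positivity) (le_of_lt hy)
      _ = Real.cosh x * (y * Real.sinh y) := by ring
  have term2 : 1 / (2 * y * Real.sinh y ^ 2) ≤ 1 / (2 * x * Real.sinh x ^ 2) := by
    apply one_div_le_one_div_of_le (by positivity)
    have : Real.sinh x ^ 2 ≤ Real.sinh y ^ 2 := by nlinarith
    nlinarith
  linarith
end

section
/- For every complex number δ with |δ| ≤ 0.38, every positive integer n, and every complex number w with w² = (2+δ)·n²π², one has w ≠ 0, cosh w ≠ 0, and tanh w / w ≠ 1/(1+δ). That is, the first compatibility condition tanh(√((2+δ)n²π²))/√((2+δ)n²π²) = 1/(1+δ) has no solution; consequently λ = n²π² is never an eigenvalue of the perturbed operator T_δ for |δ| ≤ 0.38. -/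
open Real

/-!
Since `w² = (2 + δ) n² π²` with `Re δ ≥ -1`, we get `(Re w)² ≥ Re (w²) ≥ π²`, so `|Re w| ≥ π`.
Writing `cosh` and `sinh` through exponentials gives `‖cosh w‖ ≥ sinh |Re w| > 0` and
`‖sinh w‖ ≤ cosh |Re w|`, hence `‖tanh w‖ ≤ coth |Re w| ≤ 2`. An equality
`tanh w / w = 1 / (1 + δ)` would force `π ≤ ‖w‖ = ‖1 + δ‖ ‖tanh w‖ ≤ 2 · 1.38 < 3`.
-/

theorem Real.cosh_le_two_mul_sinh {t : ℝ} (ht : 1 ≤ t) : cosh t ≤ 2 * sinh t := by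
  have hexp : 2 ≤ exp t := by linarith [add_one_le_exp t]
  have hprod : exp t * exp (-t) = 1 := by rw [← exp_add, add_neg_cancel, exp_zero]
  rw [cosh_eq, sinh_eq]
  nlinarith [exp_pos (-t)]

namespace Complex

theorem sinh_abs_re_le_norm_cosh (z : ℂ) : Real.sinh |z.re| ≤ ‖cosh z‖ := by
  have h := abs_norm_sub_norm_le (exp z) (-exp (-z))
  rw [norm_neg, norm_exp, norm_exp, neg_re, sub_neg_eq_add] at h
  calc Real.sinh |z.re| = |Real.exp z.re - Real.exp (-z.re)| / 2 := by
        rw [← Real.abs_sinh, Real.sinh_eq, abs_div, abs_two]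
    _ ≤ ‖exp z + exp (-z)‖ / 2 := by gcongr
    _ = ‖cosh z‖ := by rw [← two_cosh, norm_mul, Complex.norm_two]; ring

theorem norm_sinh_le_cosh_abs_re (z : ℂ) : ‖sinh z‖ ≤ Real.cosh |z.re| := by
  have h := norm_sub_le (exp z) (exp (-z))
  rw [norm_exp, norm_exp, neg_re] at h
  calc ‖sinh z‖ = ‖exp z - exp (-z)‖ / 2 := by rw [← two_sinh, norm_mul, Complex.norm_two]; ring
    _ ≤ (Real.exp z.re + Real.exp (-z.re)) / 2 := by gcongr
    _ = Real.cosh |z.re| := by rw [Real.cosh_abs, Real.cosh_eq]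

theorem norm_tanh_le_two {z : ℂ} (hz : 1 ≤ |z.re|) : ‖tanh z‖ ≤ 2 := by
  have hcosh : 0 < ‖cosh z‖ :=
    (Real.sinh_pos_iff.2 (by linarith)).trans_le (sinh_abs_re_le_norm_cosh z)
  rw [tanh_eq_sinh_div_cosh, norm_div, div_le_iff₀ hcosh]
  calc ‖sinh z‖ ≤ Real.cosh |z.re| := norm_sinh_le_cosh_abs_re z
    _ ≤ 2 * Real.sinh |z.re| := Real.cosh_le_two_mul_sinh hz
    _ ≤ 2 * ‖cosh z‖ := by gcongr; exact sinh_abs_re_le_norm_cosh z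

theorem re_sq_le_sq_re (z : ℂ) : (z ^ 2).re ≤ z.re ^ 2 := by
  rw [sq, mul_re, ← sq]
  nlinarith [sq_nonneg z.im]

theorem pi_le_abs_re_of_sq_eq {w δ : ℂ} {n : ℕ} (hδ : -1 ≤ δ.re) (hn : 0 < n)
    (hw : w ^ 2 = (2 + δ) * (n : ℂ) ^ 2 * (π : ℂ) ^ 2) : π ≤ |w.re| := by
  have hn1 : (1 : ℝ) ≤ n := by exact_mod_cast hn
  have hre : (w ^ 2).re = (2 + δ.re) * (n ^ 2 * π ^ 2) := by
    rw [hw, mul_assoc, ← ofReal_natCast, ← ofReal_pow, ← ofReal_pow, ← ofReal_mul, re_mul_ofReal,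
      add_re, re_ofNat]
  have hsq : π ^ 2 ≤ |w.re| ^ 2 :=
    calc π ^ 2 = 1 * (1 ^ 2 * π ^ 2) := by ring
      _ ≤ (2 + δ.re) * (n ^ 2 * π ^ 2) := by gcongr <;> linarith
      _ ≤ |w.re| ^ 2 := by rw [← hre, sq_abs]; exact re_sq_le_sq_re w
  exact abs_le_of_sq_le_sq' hsq (abs_nonneg _) |>.2

end Complex

/-- For every complex `δ` with `|δ| ≤ 0.38`, every positive integer `n`, and every complex
`w` with `w² = (2+δ)·n²π²`, one has `w ≠ 0`, `cosh w ≠ 0`, and `tanh w / w ≠ 1/(1+δ)`: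
the first compatibility condition `tanh(√((2+δ)n²π²))/√((2+δ)n²π²) = 1/(1+δ)` has no
solution, so `λ = n²π²` is never an eigenvalue of the perturbed operator `T_δ`. -/
theorem stmt_15 (δ : ℂ) (hδ : ‖δ‖ ≤ 0.38) (n : ℕ) (hn : 0 < n)
    (w : ℂ) (hw : w^2 = (2 + δ) * (n : ℂ)^2 * (π : ℂ)^2) :
    w ≠ 0 ∧ Complex.cosh w ≠ 0 ∧ Complex.tanh w / w ≠ 1 / (1 + δ) := by
  have hδre : -1 ≤ δ.re := by linarith [neg_abs_le δ.re, Complex.abs_re_le_norm δ]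
  have hre : π ≤ |w.re| := Complex.pi_le_abs_re_of_sq_eq hδre hn hw
  have hnorm : π ≤ ‖w‖ := hre.trans (Complex.abs_re_le_norm w)
  have hw0 : w ≠ 0 := norm_pos_iff.1 (pi_pos.trans_le hnorm)
  have hcosh : Complex.cosh w ≠ 0 := norm_pos_iff.1 <|
    (Real.sinh_pos_iff.2 (pi_pos.trans_le hre)).trans_le (Complex.sinh_abs_re_le_norm_cosh w)
  refine ⟨hw0, hcosh, fun h => ?_⟩
  have h1δ : ‖1 + δ‖ ≤ 1.38 := by linarith [norm_add_le 1 δ, norm_one (α := ℂ)]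
  have h1δ0 : 1 + δ ≠ 0 := by
    rintro h0
    rw [eq_neg_of_add_eq_zero_right h0, norm_neg, norm_one] at hδ
    norm_num at hδ
  rw [div_eq_div_iff hw0 h1δ0, one_mul] at h
  have htanh : ‖Complex.tanh w‖ ≤ 2 := Complex.norm_tanh_le_two (by linarith [pi_gt_three])
  have hsmall : ‖w‖ ≤ 2 * 1.38 := by
    rw [← h, norm_mul]
    gcongr
  linarith [pi_gt_three]
end

section
/- For every complex number δ with |δ| ≤ 0.38, every positive integer n, and every complex number w with w² = ((2+δ)/(1+δ))·n²π², one has w ≠ 0, cosh w ≠ 0, and tanh w / w ≠ 1+δ. That is, the second compatibility condition tanh(√(((2+δ)/(1+δ))n²π²))/√(((2+δ)/(1+δ))n²π²) = 1+δ has no solution; consequently λ = −n²π²/(1+δ) is never an eigenvalue of the perturbed operator T_δ for |δ| ≤ 0.38. -/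
/-!
Write `w = x + iy`. Since `(2+δ)/(1+δ) = 1 + (1+δ)⁻¹` has real part `> 1`, comparing real parts
in `w² = ((2+δ)/(1+δ)) n²π²` gives `x² > π² > 9`; in particular `w ≠ 0` and
`|cosh w|² = sinh² x + cos² y > 0`. If `tanh w / w = 1+δ`, taking squared moduli in
`sinh w = (1+δ) w cosh w` gives `sinh² x + sin² y = |1+δ|² |w|² (sinh² x + cos² y)`, which is
impossible because `|1+δ|² |w|² ≥ 0.62² · 9 > 2` while `sin² y ≤ 1 < sinh² x`.
-/

open Real

namespace Real

theorem sq_le_sinh_sq (x : ℝ) : x ^ 2 ≤ sinh x ^ 2 := by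
  rcases le_total 0 x with hx | hx
  · exact pow_le_pow_left₀ hx (self_le_sinh_iff.mpr hx) 2
  · have h := pow_le_pow_left₀ (neg_nonneg.mpr hx) (self_le_sinh_iff.mpr (neg_nonneg.mpr hx)) 2
    rwa [sinh_neg, neg_sq, neg_sq] at h

end Real

namespace Complex

theorem cosh_ne_zero_of_re_ne_zero {z : ℂ} (hz : z.re ≠ 0) : cosh z ≠ 0 := by
  rw [← normSq_pos, normSq_cosh]
  have : 0 < Real.sinh z.re ^ 2 := by positivity
  positivity

theorem sinh_ne_mul_mul_cosh {c z : ℂ} (h : 1 < (‖c * z‖ ^ 2 - 1) * Real.sinh z.re ^ 2) :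
    sinh z ≠ c * z * cosh z := by
  intro heq
  have hsq := congrArg normSq heq
  rw [normSq_sinh, normSq_mul, normSq_cosh, ← Complex.sq_norm (c * z)] at hsq
  nlinarith [Real.sin_sq_add_cos_sq z.im, sq_nonneg (Real.cos z.im), sq_nonneg ‖c * z‖]

theorem one_lt_re_add_one_div {u : ℂ} (hu : 0 < u.re) : 1 < ((u + 1) / u).re := by
  have hu0 : u ≠ 0 := fun h ↦ by simp [h] at hu
  rw [add_div, div_self hu0, one_div, add_re, one_re, inv_re, lt_add_iff_pos_right]
  exact div_pos hu (normSq_pos.mpr hu0)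

theorem sq_lt_re_sq_of_sq_eq {w z : ℂ} {t : ℝ} (ht : 0 < t) (hz : 1 < z.re)
    (hw : w ^ 2 = z * t) : t < w.re ^ 2 := by
  have hre := congrArg re hw
  rw [sq, mul_re, re_mul_ofReal] at hre
  nlinarith [sq_nonneg w.im]

end Complex

open Complex in
/-- For every complex `δ` with `|δ| ≤ 0.38`, every positive integer `n`, and every complex
`w` with `w² = ((2+δ)/(1+δ))·n²π²`, one has `w ≠ 0`, `cosh w ≠ 0`, and `tanh w / w ≠ 1+δ`:
the second compatibility condition `tanh(√(((2+δ)/(1+δ))n²π²))/√(((2+δ)/(1+δ))n²π²) = 1+δ`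
has no solution, so `λ = −n²π²/(1+δ)` is never an eigenvalue of the perturbed operator
`T_δ`. -/
theorem stmt_16 (δ : ℂ) (hδ : ‖δ‖ ≤ 0.38) (n : ℕ) (hn : 0 < n)
    (w : ℂ) (hw : w^2 = ((2 + δ) / (1 + δ)) * (n : ℂ)^2 * (π : ℂ)^2) :
    w ≠ 0 ∧ Complex.cosh w ≠ 0 ∧ Complex.tanh w / w ≠ 1 + δ := by
  have hre : 0 < (1 + δ).re := by
    have := abs_le.mp ((abs_re_le_norm δ).trans hδ)
    simp only [add_re, one_re]; linarith
  have hn1 : (1 : ℝ) ≤ n := by exact_mod_cast hn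
  have hx : 9 < w.re ^ 2 := by
    have hpi : 9 < (n : ℝ) ^ 2 * π ^ 2 := by
      have : 9 < π ^ 2 := by nlinarith [pi_gt_three]
      nlinarith [one_le_pow₀ (n := 2) hn1]
    have hz : 1 < ((2 + δ) / (1 + δ)).re := by
      convert one_lt_re_add_one_div hre using 3; ring
    exact hpi.trans (sq_lt_re_sq_of_sq_eq (by positivity) hz (by rw [hw]; push_cast; ring))
  have hx0 : w.re ≠ 0 := by rintro h; norm_num [h] at hx
  have hw0 : w ≠ 0 := by rintro rfl; exact hx0 rfl
  have hcosh := cosh_ne_zero_of_re_ne_zero hx0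
  refine ⟨hw0, hcosh, fun htanh ↦ sinh_ne_mul_mul_cosh (c := 1 + δ) (z := w) ?_ ?_⟩
  · have h1δ : 0.62 ≤ ‖1 + δ‖ := by
      have := norm_sub_norm_le (1 : ℂ) (-δ)
      rw [norm_one, norm_neg, sub_neg_eq_add] at this; linarith
    have hnorm : 3 < ‖w‖ := by
      nlinarith [abs_re_le_norm w, sq_abs w.re, abs_nonneg w.re, norm_nonneg w]
    have hcw : 1.86 ^ 2 ≤ ‖(1 + δ) * w‖ ^ 2 := by
      rw [norm_mul]; gcongr; nlinarith
    nlinarith [Real.sq_le_sinh_sq w.re]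
  · rw [← htanh, Complex.tanh_eq_sinh_div_cosh]; field_simp
end
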